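/- Let F̂(η) = (1/t) log f(w_{t,η}) be the log-transformed meta objective. Then F̂ is differentiable on [0,∞) with F̂'(η) = (−2 Σ_{i=1}^d c_i² λ_i² (1 − ηλ_i)^{2t−1}) / (Σ_{i=1}^d c_i² λ_i (1 − ηλ_i)^{2t}), and the denominator is strictly positive for every η ≥ 0. Moreover F̂ has exactly one stationary point η* on [0,∞), which is its unique minimizer on [0,∞); F̂'(η) < 0 for all η ∈ [0, η*), F̂'(η) > 0 for all η ∈ (η*, ∞), and 1/L ≤ η* ≤ 1/α. -/

import Mathlib

/-!
In the eigenbasis of `H`, `2 f(w_{t,η}) = ∑ cᵢ² λᵢ (1 - ηλᵢ)^{2t}`, so `F̂' = -2 N / g` with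
`g(η) = ∑ cᵢ² λᵢ (1 - ηλᵢ)^{2t} > 0` and `N(η) = ∑ cᵢ² λᵢ² (1 - ηλᵢ)^{2t-1}`. Because `2t - 1` is
odd, each summand of `N` is strictly decreasing in `η`, so `N` is strictly decreasing. At
`η = 1/L` every factor `1 - ηλᵢ` is `≥ 0` and at `η = 1/α` every one is `≤ 0`, with strict signs
at the extreme eigenvalues since `c₁, c_d ≠ 0`; hence `N` has a unique zero `η*` in
`[1/L, 1/α]`, where `F̂'` changes sign from negative to positive.
-/

open Finset

section Spectral

variable {ι : Type*} [Fintype ι] (c lam : ι → ℝ) (n : ℕ)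

/-- Twice the quadratic loss after `n` gradient steps of size `η`, in the eigenbasis. -/
def quadLoss (η : ℝ) : ℝ := ∑ i, c i ^ 2 * lam i * (1 - η * lam i) ^ (2 * n)

/-- `-1/(2n)` times the derivative of `quadLoss` in the step size. -/
def lossSlope (η : ℝ) : ℝ := ∑ i, c i ^ 2 * lam i ^ 2 * (1 - η * lam i) ^ (2 * n - 1)

variable {c lam n}

theorem hasDerivAt_quadLoss (η : ℝ) :
    HasDerivAt (quadLoss c lam n) (-(2 * n) * lossSlope c lam n η) η := by
  have hterm (i : ι) : HasDerivAt (fun x : ℝ => c i ^ 2 * lam i * (1 - x * lam i) ^ (2 * n))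
      (c i ^ 2 * lam i * ((2 * n : ℕ) * (1 - η * lam i) ^ (2 * n - 1) * (-lam i))) η := by
    have hlin : HasDerivAt (fun x : ℝ => 1 - x * lam i) (-lam i) η := by
      simpa using ((hasDerivAt_id η).mul_const (lam i)).const_sub 1
    exact (hlin.pow (2 * n)).const_mul _
  refine (HasDerivAt.fun_sum (u := univ) fun i _ => hterm i).congr_deriv ?_
  rw [lossSlope, mul_sum]
  refine sum_congr rfl fun i _ => ?_
  push_cast
  ring

theorem continuous_lossSlope : Continuous (lossSlope c lam n) := by
  unfold lossSlope
  fun_prop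

theorem quadLoss_pos (hlam : ∀ i, 0 < lam i) {i j : ι} (hci : c i ≠ 0) (hcj : c j ≠ 0)
    (hij : lam i ≠ lam j) (η : ℝ) : 0 < quadLoss c lam n η := by
  have hnonneg (k : ι) : 0 ≤ c k ^ 2 * lam k * (1 - η * lam k) ^ (2 * n) :=
    mul_nonneg (by have := hlam k; positivity) ((even_two_mul n).pow_nonneg _)
  have hterm_pos {k : ι} (hck : c k ≠ 0) (hk : 1 - η * lam k ≠ 0) :
      0 < c k ^ 2 * lam k * (1 - η * lam k) ^ (2 * n) :=
    mul_pos (by have := hlam k; positivity) ((even_two_mul n).pow_pos hk)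
  by_cases hi : 1 - η * lam i = 0
  · -- `1 - ηλ` vanishes for at most one value of `λ`
    have hj : 1 - η * lam j ≠ 0 := fun hj =>
      hij (mul_left_cancel₀ (left_ne_zero_of_mul_eq_one (a := η) (by linarith)) (by linarith))
    exact sum_pos' (fun k _ => hnonneg k) ⟨j, mem_univ _, hterm_pos hcj hj⟩
  · exact sum_pos' (fun k _ => hnonneg k) ⟨i, mem_univ _, hterm_pos hci hi⟩

theorem strictAnti_lossSlope (hn : 1 ≤ n) (hlam : ∀ i, 0 < lam i) {i : ι} (hci : c i ≠ 0) :
    StrictAnti (lossSlope c lam n) := by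
  have hodd : Odd (2 * n - 1) := ⟨n - 1, by omega⟩
  intro a b hab
  refine sum_lt_sum (fun k _ => ?_) ⟨i, mem_univ _, ?_⟩
  · have hk : 1 - b * lam k ≤ 1 - a * lam k := by nlinarith [hlam k]
    exact mul_le_mul_of_nonneg_left (hodd.strictMono_pow.monotone hk) (by positivity)
  · have hi : 1 - b * lam i < 1 - a * lam i := by nlinarith [hlam i]
    exact mul_lt_mul_of_pos_left (hodd.strictMono_pow hi) (by have := hlam i; positivity)

theorem lossSlope_pos (hn : 1 ≤ n) {η : ℝ} (hle : ∀ i, η * lam i ≤ 1) {j : ι} (hcj : c j ≠ 0)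
    (hj0 : lam j ≠ 0) (hj : η * lam j < 1) : 0 < lossSlope c lam n η := by
  have hodd : Odd (2 * n - 1) := ⟨n - 1, by omega⟩
  refine sum_pos' (fun k _ => ?_) ⟨j, mem_univ _, ?_⟩
  · exact mul_nonneg (by positivity) (hodd.pow_nonneg_iff.mpr (by linarith [hle k]))
  · exact mul_pos (by positivity) (hodd.pow_pos_iff.mpr (by linarith))

theorem lossSlope_neg (hn : 1 ≤ n) {η : ℝ} (hge : ∀ i, 1 ≤ η * lam i) {j : ι} (hcj : c j ≠ 0)
    (hj : 1 < η * lam j) : lossSlope c lam n η < 0 := by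
  have hodd : Odd (2 * n - 1) := ⟨n - 1, by omega⟩
  have hj0 : lam j ≠ 0 := by rintro h; simp [h] at hj; linarith
  refine sum_neg' (fun k _ => ?_) ⟨j, mem_univ _, ?_⟩
  · exact mul_nonpos_of_nonneg_of_nonpos (by positivity) (hodd.pow_nonpos (by linarith [hge k]))
  · exact mul_neg_of_pos_of_neg (by positivity) (hodd.pow_neg (by linarith))

theorem exists_lossSlope_eq_zero (hn : 1 ≤ n) {L α : ℝ} (hα : 0 < α) (hαL : α ≤ L)
    (hlamL : ∀ i, lam i ≤ L) (hαlam : ∀ i, α ≤ lam i) {i j : ι} (hci : c i ≠ 0)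
    (hcj : c j ≠ 0) (hi : α < lam i) (hj : lam j < L) :
    ∃ η ∈ Set.Icc (1 / L) (1 / α), lossSlope c lam n η = 0 := by
  have hL : 0 < L := hα.trans_le hαL
  have hpos : 0 < lossSlope c lam n (1 / L) :=
    lossSlope_pos hn (fun k => by rw [one_div_mul_eq_div, div_le_one hL]; exact hlamL k) hcj
      (hα.trans_le (hαlam j)).ne' (by rwa [one_div_mul_eq_div, div_lt_one hL])
  have hneg : lossSlope c lam n (1 / α) < 0 :=
    lossSlope_neg hn (fun k => by rw [one_div_mul_eq_div, one_le_div hα]; exact hαlam k) hci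
      (by rwa [one_div_mul_eq_div, one_lt_div hα])
  exact intermediate_value_Icc' (one_div_le_one_div_of_le hα hαL)
    continuous_lossSlope.continuousOn ⟨hneg.le, hpos.le⟩

theorem hasDerivAt_log_quadLoss (hn : n ≠ 0) {η : ℝ} (hη : quadLoss c lam n η ≠ 0) :
    HasDerivAt (fun x => 1 / (n : ℝ) * Real.log (1 / 2 * quadLoss c lam n x))
      (-2 * lossSlope c lam n η / quadLoss c lam n η) η := by
  have hlog := (((hasDerivAt_quadLoss η).const_mul (1 / 2 : ℝ)).log
    (mul_ne_zero (by norm_num) hη)).const_mul (1 / (n : ℝ))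
  refine hlog.congr_deriv ?_
  field_simp

end Spectral

theorem lt_of_deriv_neg_of_deriv_pos {F : ℝ → ℝ} {x₀ : ℝ} (hF : Differentiable ℝ F)
    (hneg : ∀ x < x₀, deriv F x < 0) (hpos : ∀ x, x₀ < x → 0 < deriv F x) {x : ℝ}
    (hx : x ≠ x₀) : F x₀ < F x := by
  rcases hx.lt_or_gt with h | h
  · have hanti : StrictAntiOn F (Set.Iic x₀) :=
      strictAntiOn_of_deriv_neg (convex_Iic x₀) hF.continuous.continuousOn
        fun y hy => hneg y (by rwa [interior_Iic] at hy)
    exact hanti h.le (Set.mem_Iic.2 le_rfl) h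
  · have hmono : StrictMonoOn F (Set.Ici x₀) :=
      strictMonoOn_of_deriv_pos (convex_Ici x₀) hF.continuous.continuousOn
        fun y hy => hpos y (by rwa [interior_Ici] at hy)
    exact hmono (Set.mem_Ici.2 le_rfl) h.le h

/-- The log-transformed meta objective `F̂(η) = (1/t) log f(w_{t,η})` is
differentiable on `[0,∞)` with derivative
`F̂'(η) = (−2 Σᵢ cᵢ² λᵢ² (1 − ηλᵢ)^{2t−1}) / (Σᵢ cᵢ² λᵢ (1 − ηλᵢ)^{2t})`, the denominator being
strictly positive for every `η ≥ 0`.  Moreover `F̂` has exactly one stationary point `η*` on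
`[0,∞)`, which is its unique minimizer there; `F̂' < 0` on `[0,η*)`, `F̂' > 0` on `(η*,∞)`,
and `1/L ≤ η* ≤ 1/α`. -/
theorem stmt2 (d t : ℕ) (hd : 2 ≤ d) (ht : 1 ≤ t)
    (lam c : Fin d → ℝ)
    (hpos : ∀ i, 0 < lam i)
    (hdec : ∀ i j : Fin d, i ≤ j → lam j ≤ lam i)
    (L α : ℝ)
    (hLdef : L = lam ⟨0, by omega⟩)
    (hadef : α = lam ⟨d - 1, by omega⟩)
    (hgap : α < L)
    (cmin : ℝ)
    (hcmindef : cmin = min |c ⟨0, by omega⟩| |c ⟨d - 1, by omega⟩|)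
    (hcmin : 0 < cmin)
    (F : ℝ → ℝ)
    (hF : ∀ η : ℝ,
      F η = (1 / (t : ℝ)) *
        Real.log ((1 / 2) * ∑ i, c i ^ 2 * lam i * (1 - η * lam i) ^ (2 * t))) :
    (∀ η : ℝ, 0 ≤ η →
        (0 < ∑ i, c i ^ 2 * lam i * (1 - η * lam i) ^ (2 * t)) ∧
        HasDerivAt F
          ((-2 * ∑ i, c i ^ 2 * lam i ^ 2 * (1 - η * lam i) ^ (2 * t - 1)) /
            (∑ i, c i ^ 2 * lam i * (1 - η * lam i) ^ (2 * t))) η)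
    ∧ ∃ ηstar : ℝ,
        (1 / L ≤ ηstar ∧ ηstar ≤ 1 / α) ∧
        deriv F ηstar = 0 ∧
        (∀ η : ℝ, 0 ≤ η → deriv F η = 0 → η = ηstar) ∧
        (∀ η : ℝ, 0 ≤ η → η ≠ ηstar → F ηstar < F η) ∧
        (∀ η : ℝ, 0 ≤ η → η < ηstar → deriv F η < 0) ∧
        (∀ η : ℝ, ηstar < η → 0 < deriv F η) := by
  set i₀ : Fin d := ⟨0, by omega⟩
  set i₁ : Fin d := ⟨d - 1, by omega⟩
  have hc₀ : c i₀ ≠ 0 := abs_pos.mp (hcmin.trans_le (hcmindef ▸ min_le_left _ _))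
  have hc₁ : c i₁ ≠ 0 := abs_pos.mp (hcmin.trans_le (hcmindef ▸ min_le_right _ _))
  have hlamL : ∀ i, lam i ≤ L := fun i => hLdef ▸ hdec i₀ i (Fin.le_def.2 (Nat.zero_le _))
  have hαlam : ∀ i, α ≤ lam i := fun i => hadef ▸ hdec i i₁ (Fin.le_def.2 (by simp [i₁]; omega))
  have hg : ∀ η, 0 < quadLoss c lam t η :=
    quadLoss_pos hpos hc₀ hc₁ (by rw [← hLdef, ← hadef]; exact hgap.ne')
  have hF' : ∀ η, HasDerivAt F (-2 * lossSlope c lam t η / quadLoss c lam t η) η := fun η =>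
    funext hF ▸ hasDerivAt_log_quadLoss (by omega) (hg η).ne'
  obtain ⟨η₀, hη₀, hslope⟩ := exists_lossSlope_eq_zero ht (hadef ▸ hpos i₁) hgap.le hlamL hαlam
    hc₀ hc₁ (hLdef ▸ hgap) (hadef ▸ hgap)
  have hderiv : ∀ η, deriv F η = -2 * lossSlope c lam t η / quadLoss c lam t η :=
    fun η => (hF' η).deriv
  have hanti := strictAnti_lossSlope ht hpos hc₀
  have hderiv_neg : ∀ η < η₀, deriv F η < 0 := fun η hη => by
    rw [hderiv]; exact div_neg_of_neg_of_pos (by linarith [hslope ▸ hanti hη]) (hg η)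
  have hderiv_pos : ∀ η, η₀ < η → 0 < deriv F η := fun η hη => by
    rw [hderiv]; exact div_pos (by linarith [hslope ▸ hanti hη]) (hg η)
  refine ⟨fun η _ => ⟨hg η, hF' η⟩, η₀, hη₀, by simp [hderiv, hslope], fun η _ hη => ?_,
    fun η _ hne => lt_of_deriv_neg_of_deriv_pos (fun x => (hF' x).differentiableAt)
      hderiv_neg hderiv_pos hne,
    fun η _ => hderiv_neg η, hderiv_pos⟩
  by_contra hne
  rcases Ne.lt_or_gt hne with h | h
  · exact (hderiv_neg η h).ne hη
  · exact (hderiv_pos η h).ne' hη
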